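/- arXiv:2603.19824 — 2 statements merged into one kernel-verified Lean document; each statement's English description precedes it below -/
import Mathlib

section
/- Fix $r>1$ and $c>0$. The function $\mathbb{V}_1(\alpha)=\int_0^1 \frac{dt}{\sqrt{(1-t^2)+\frac{\alpha^{2r-2}}{r\,c}(1-t^{2r})}}$ is continuous and strictly decreasing on $(0,\infty)$, with $\mathbb{V}_1(\alpha)\to\pi/2$ as $\alpha\to 0^+$ and $\mathbb{V}_1(\alpha)\to 0$ as $\alpha\to\infty$. Consequently $\mathbb{V}_1$ is a bijection from $(0,\infty)$ onto $(0,\pi/2)$. -/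
/-
With `k = α ^ (2r - 2) / (r c)` (`V1.coeff`), `V₁ = W ∘ k` where
`W k = ∫₀¹ (1 - t² + k (1 - t^{2r}))^{-1/2} dt` (`V1.ofCoeff`), and `k` increases continuously
from `0` to `∞` with `α`. Since `t^{2r} ≤ t²` on `[0, 1]`, the radicand is at least
`(1 + k)(1 - t²)`, so the integrand is dominated by `(1 - t²)^{-1/2}`, whose integral is
`arcsin 1 = π/2`. Dominated convergence makes `W` continuous on `[0, ∞)` with `W 0 = π/2`;
the integrand decreases strictly in `k`, so `W` does too; and `W k ≤ (π/2) / √(1 + k) → 0`.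
The intermediate value theorem then gives the bijection.
-/

open Real

noncomputable def V1 (r c α : ℝ) : ℝ :=
  ∫ t in (0:ℝ)..1,
    1 / Real.sqrt ((1 - t ^ 2) + α ^ (2 * r - 2) / (r * c) * (1 - t ^ (2 * r)))

open MeasureTheory Filter Set Topology

theorem StrictAntiOn.bijOn_Ioi_Ioo {f : ℝ → ℝ} {a b : ℝ} (hf : StrictAntiOn f (Ioi 0))
    (hcont : ContinuousOn f (Ioi 0)) (h0 : Tendsto f (𝓝[>] 0) (𝓝 a))
    (htop : Tendsto f atTop (𝓝 b)) : BijOn f (Ioi 0) (Ioo b a) := by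
  have hle : ∀ x ∈ Ioi (0:ℝ), f x ≤ a := fun x hx =>
    ge_of_tendsto h0 <| eventually_of_mem (Ioo_mem_nhdsGT (mem_Ioi.1 hx)) fun y hy =>
      hf.antitoneOn hy.1 hx hy.2.le
  have hge : ∀ x ∈ Ioi (0:ℝ), b ≤ f x := fun x hx =>
    le_of_tendsto htop <| (eventually_ge_atTop x).mono fun y hy =>
      hf.antitoneOn hx (lt_of_lt_of_le hx hy) hy
  refine ⟨fun x hx => ⟨?_, ?_⟩, hf.injOn, fun y hy => ?_⟩
  · have h2x : x < 2 * x := by linarith [mem_Ioi.1 hx]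
    exact (hge _ (hx.trans h2x)).trans_lt (hf hx (hx.trans h2x) h2x)
  · have hx2 : x / 2 < x := by linarith [mem_Ioi.1 hx]
    have hx2pos : x / 2 ∈ Ioi (0:ℝ) := half_pos (mem_Ioi.1 hx)
    exact (hf hx2pos hx hx2).trans_le (hle _ hx2pos)
  obtain ⟨u, hu, hu0⟩ :=
    ((h0.eventually (eventually_gt_nhds hy.2)).and self_mem_nhdsWithin).exists
  obtain ⟨v, hv, huv⟩ :=
    ((htop.eventually (eventually_lt_nhds hy.1)).and (eventually_gt_atTop u)).exists
  have hsub : Icc u v ⊆ Ioi 0 := fun x hx => lt_of_lt_of_le hu0 hx.1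
  obtain ⟨x, hx, rfl⟩ := intermediate_value_Icc' huv.le (hcont.mono hsub) ⟨hv.le, hu.le⟩
  exact ⟨x, hsub hx, rfl⟩

theorem intervalIntegrable_one_div_sqrt_one_sub_sq :
    IntervalIntegrable (fun t : ℝ => 1 / √(1 - t ^ 2)) volume 0 1 := by
  refine intervalIntegral.intervalIntegrable_deriv_of_nonneg continuous_arcsin.continuousOn
    (fun x hx => hasDerivAt_arcsin ?_ ?_) (fun x _ => by positivity)
  · simp only [zero_le_one, min_eq_left] at hx; linarith [hx.1]
  · simp only [zero_le_one, max_eq_right] at hx; exact hx.2.ne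

theorem integral_one_div_sqrt_one_sub_sq : ∫ t in (0:ℝ)..1, 1 / √(1 - t ^ 2) = π / 2 := by
  rw [intervalIntegral.integral_eq_sub_of_hasDerivAt_of_le zero_le_one
    continuous_arcsin.continuousOn
    (fun x hx => hasDerivAt_arcsin (by linarith [hx.1]) hx.2.ne)
    intervalIntegrable_one_div_sqrt_one_sub_sq, arcsin_one, arcsin_zero, sub_zero]

theorem rpow_two_mul_le_sq {r t : ℝ} (hr : 1 ≤ r) (ht₀ : 0 ≤ t) (ht₁ : t ≤ 1) :
    t ^ (2 * r) ≤ t ^ 2 := by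
  rw [← rpow_two]
  exact rpow_le_rpow_of_exponent_ge' ht₀ ht₁ zero_le_two (by linarith)

namespace V1

variable {r c k t : ℝ}

noncomputable def radicand (r k t : ℝ) : ℝ := (1 - t ^ 2) + k * (1 - t ^ (2 * r))

noncomputable def ofCoeff (r k : ℝ) : ℝ := ∫ t in (0:ℝ)..1, 1 / √(radicand r k t)

noncomputable def coeff (r c α : ℝ) : ℝ := α ^ (2 * r - 2) / (r * c)

theorem eq_ofCoeff_comp_coeff : V1 r c = ofCoeff r ∘ coeff r c := rfl

theorem radicand_zero : radicand r 0 t = 1 - t ^ 2 := by simp [radicand]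

theorem radicand_one : radicand r k 1 = 0 := by simp [radicand]

theorem one_add_mul_le_radicand (hr : 1 ≤ r) (hk : 0 ≤ k) (ht₀ : 0 ≤ t) (ht₁ : t ≤ 1) :
    (1 + k) * (1 - t ^ 2) ≤ radicand r k t := by
  have := rpow_two_mul_le_sq hr ht₀ ht₁
  unfold radicand; nlinarith

theorem radicand_pos (hr : 1 ≤ r) (hk : 0 ≤ k) (ht₀ : 0 ≤ t) (ht₁ : t < 1) :
    0 < radicand r k t := by
  have h : 0 < 1 - t ^ 2 := by nlinarith
  exact (by positivity : 0 < (1 + k) * (1 - t ^ 2)).trans_le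
    (one_add_mul_le_radicand hr hk ht₀ ht₁.le)

theorem radicand_strictMono (hr : 0 < r) (ht₀ : 0 ≤ t) (ht₁ : t < 1) :
    StrictMono fun k => radicand r k t := by
  have : t ^ (2 * r) < 1 := rpow_lt_one ht₀ ht₁ (by positivity)
  intro k₁ k₂ hk
  unfold radicand; nlinarith

theorem one_div_sqrt_radicand_le (hr : 1 ≤ r) (hk : 0 ≤ k) (ht₀ : 0 ≤ t) (ht₁ : t < 1) :
    1 / √(radicand r k t) ≤ 1 / √(1 + k) * (1 / √(1 - t ^ 2)) := by
  rw [one_div_mul_one_div, ← sqrt_mul (by linarith)]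
  have h : 0 < 1 - t ^ 2 := by nlinarith
  exact one_div_le_one_div_of_le (sqrt_pos.2 (by positivity))
    (sqrt_le_sqrt (one_add_mul_le_radicand hr hk ht₀ ht₁.le))

theorem one_div_sqrt_radicand_le_one_div_sqrt_one_sub_sq (hr : 1 ≤ r) (hk : 0 ≤ k)
    (ht₀ : 0 ≤ t) (ht₁ : t ≤ 1) : 1 / √(radicand r k t) ≤ 1 / √(1 - t ^ 2) := by
  rcases ht₁.lt_or_eq with ht₁ | rfl
  · refine (one_div_sqrt_radicand_le hr hk ht₀ ht₁).trans
      (mul_le_of_le_one_left (by positivity) ?_)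
    exact div_le_one_of_le₀ (one_le_sqrt.2 (by linarith)) (sqrt_nonneg _)
  · simp [radicand_one]

theorem intervalIntegrable_one_div_sqrt_radicand (hr : 1 ≤ r) (hk : 0 ≤ k) :
    IntervalIntegrable (fun t => 1 / √(radicand r k t)) volume 0 1 := by
  refine intervalIntegrable_one_div_sqrt_one_sub_sq.mono_fun ?_ ?_
  · refine Measurable.aestronglyMeasurable ?_
    unfold radicand; fun_prop
  · filter_upwards [ae_restrict_mem measurableSet_uIoc] with t ht
    rw [uIoc_of_le zero_le_one] at ht
    rw [norm_of_nonneg (by positivity), norm_of_nonneg (by positivity)]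
    exact one_div_sqrt_radicand_le_one_div_sqrt_one_sub_sq hr hk ht.1.le ht.2

theorem ofCoeff_zero : ofCoeff r 0 = π / 2 := by
  simp only [ofCoeff, radicand_zero, integral_one_div_sqrt_one_sub_sq]

theorem ofCoeff_le (hr : 1 ≤ r) (hk : 0 ≤ k) : ofCoeff r k ≤ 1 / √(1 + k) * (π / 2) := by
  rw [← integral_one_div_sqrt_one_sub_sq, ← intervalIntegral.integral_const_mul]
  exact intervalIntegral.integral_mono_on_of_le_Ioo zero_le_one
    (intervalIntegrable_one_div_sqrt_radicand hr hk)
    (intervalIntegrable_one_div_sqrt_one_sub_sq.const_mul _)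
    fun t ht => one_div_sqrt_radicand_le hr hk ht.1.le ht.2

theorem ofCoeff_nonneg : 0 ≤ ofCoeff r k :=
  intervalIntegral.integral_nonneg zero_le_one fun _ _ => by positivity

theorem strictAntiOn_ofCoeff (hr : 1 ≤ r) : StrictAntiOn (ofCoeff r) (Ici 0) := by
  intro k₁ hk₁ k₂ hk₂ hk
  have hi₁ := intervalIntegrable_one_div_sqrt_radicand hr hk₁
  have hi₂ := intervalIntegrable_one_div_sqrt_radicand hr hk₂
  rw [← sub_pos, ofCoeff, ofCoeff, ← intervalIntegral.integral_sub hi₁ hi₂]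
  refine intervalIntegral.intervalIntegral_pos_of_pos_on (hi₁.sub hi₂) (fun t ht => ?_)
    zero_lt_one
  have hpos := radicand_pos hr hk₁ ht.1.le ht.2
  have hlt := radicand_strictMono (r := r) (by linarith) ht.1.le ht.2 hk
  exact sub_pos.2 (one_div_lt_one_div_of_lt (sqrt_pos.2 hpos) (sqrt_lt_sqrt hpos.le hlt))

theorem continuousOn_ofCoeff (hr : 1 ≤ r) : ContinuousOn (ofCoeff r) (Ici 0) := by
  intro k₀ hk₀
  refine intervalIntegral.continuousWithinAt_of_dominated_interval
    (eventually_nhdsWithin_of_forall fun k hk =>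
      (intervalIntegrable_one_div_sqrt_radicand hr hk).def'.1)
    (eventually_nhdsWithin_of_forall fun k hk => ae_of_all _ fun t ht => ?_)
    intervalIntegrable_one_div_sqrt_one_sub_sq (ae_of_all _ fun t ht => ?_)
  · rw [uIoc_of_le zero_le_one] at ht
    rw [norm_of_nonneg (by positivity)]
    exact one_div_sqrt_radicand_le_one_div_sqrt_one_sub_sq hr hk ht.1.le ht.2
  · rw [uIoc_of_le zero_le_one] at ht
    rcases ht.2.lt_or_eq with ht₁ | rfl
    · have hpos := radicand_pos hr hk₀ ht.1.le ht₁
      have hsqrt : ContinuousAt (fun k => √(radicand r k t)) k₀ := by unfold radicand; fun_prop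
      exact (continuousAt_const.div hsqrt (sqrt_pos.2 hpos).ne').continuousWithinAt
    · simp only [radicand_one]
      exact continuousWithinAt_const

theorem tendsto_ofCoeff_atTop (hr : 1 ≤ r) : Tendsto (ofCoeff r) atTop (𝓝 0) := by
  have hbound : Tendsto (fun k => 1 / √(1 + k) * (π / 2)) atTop (𝓝 0) := by
    have h : Tendsto (fun k => √(1 + k)) atTop atTop :=
      tendsto_sqrt_atTop.comp (tendsto_atTop_add_const_left _ 1 tendsto_id)
    simpa only [one_div, zero_mul, Pi.inv_apply] using h.inv_tendsto_atTop.mul_const (π / 2)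
  exact tendsto_of_tendsto_of_tendsto_of_le_of_le' tendsto_const_nhds hbound
    (Eventually.of_forall fun _ => ofCoeff_nonneg)
    ((eventually_ge_atTop 0).mono fun _ hk => ofCoeff_le hr hk)

theorem coeff_pos (hc : 0 < c) (hr : 0 < r) {α : ℝ} (hα : 0 < α) : 0 < coeff r c α := by
  unfold coeff; positivity

theorem strictMonoOn_coeff (hr : 1 < r) (hc : 0 < c) : StrictMonoOn (coeff r c) (Ioi 0) :=
  fun _ ha _ _ hab => div_lt_div_of_pos_right (rpow_lt_rpow (le_of_lt ha) hab (by linarith))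
    (by positivity)

theorem continuousOn_coeff : ContinuousOn (coeff r c) (Ioi 0) :=
  fun α hα => ((continuousAt_rpow_const α _ (Or.inl hα.ne')).div_const _).continuousWithinAt

theorem tendsto_coeff_nhdsGT_zero (hr : 1 < r) (hc : 0 < c) :
    Tendsto (coeff r c) (𝓝[>] 0) (𝓝[≥] 0) := by
  refine tendsto_nhdsWithin_of_tendsto_nhds_of_eventually_within _ ?_
    (eventually_nhdsWithin_of_forall fun α hα => (coeff_pos hc (by linarith) hα).le)
  have h := ((continuousAt_rpow_const 0 (2 * r - 2) (Or.inr (by linarith))).div_const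
    (r * c)).tendsto
  rw [zero_rpow (by linarith), zero_div] at h
  exact h.mono_left nhdsWithin_le_nhds

theorem tendsto_coeff_atTop (hr : 1 < r) (hc : 0 < c) : Tendsto (coeff r c) atTop atTop :=
  (tendsto_rpow_atTop (by linarith)).atTop_div_const (by positivity)

end V1

open V1

theorem stmt_7 (r c : ℝ) (hr : 1 < r) (hc : 0 < c) :
    ContinuousOn (V1 r c) (Set.Ioi 0) ∧
    StrictAntiOn (V1 r c) (Set.Ioi 0) ∧
    Filter.Tendsto (V1 r c) (nhdsWithin 0 (Set.Ioi 0)) (nhds (π / 2)) ∧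
    Filter.Tendsto (V1 r c) Filter.atTop (nhds 0) ∧
    Set.BijOn (V1 r c) (Set.Ioi 0) (Set.Ioo 0 (π / 2)) := by
  have hk : MapsTo (coeff r c) (Ioi 0) (Ici 0) := fun α hα =>
    (coeff_pos hc (by linarith) hα).le
  rw [eq_ofCoeff_comp_coeff]
  have hcont := (continuousOn_ofCoeff hr.le).comp continuousOn_coeff hk
  have hanti := (strictAntiOn_ofCoeff hr.le).comp_strictMonoOn (strictMonoOn_coeff hr hc) hk
  have h0 : Tendsto (ofCoeff r ∘ coeff r c) (𝓝[>] 0) (𝓝 (π / 2)) := by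
    have := (continuousOn_ofCoeff hr.le 0 self_mem_Ici).tendsto
    rw [ofCoeff_zero] at this
    exact this.comp (tendsto_coeff_nhdsGT_zero hr hc)
  have htop := (tendsto_ofCoeff_atTop hr.le).comp (tendsto_coeff_atTop hr hc)
  exact ⟨hcont, hanti, h0, htop, hanti.bijOn_Ioi_Ioo hcont h0 htop⟩
end

section
/- Suppose $u$ is a nontrivial solution of the critical equation on $[0,1]$ with $u(0)=u(1)=0$, having exactly $m-1$ interior zeros, with $\lambda-q_0>0$ and $\lambda\neq q_0+m^2\pi^2$. If $\lambda-q_0>m^2\pi^2$ then $\varepsilon=+1$; if $0<\lambda-q_0<m^2\pi^2$ then $\varepsilon=-1$. This follows from the quarter-period identity $\frac{1}{2m}=\frac{1}{\sqrt{\lambda-q_0}}\int_0^1\frac{dt}{\sqrt{(1-t^2)-\frac{\varepsilon a^{2p^*-2}}{p^*(\lambda-q_0)}(1-t^{2p^*})}}$ together with the comparison of the integral with $\pi/2$. -/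
/-!
Write the equation as `u'' + P u = 0` with `P = λ - q₀ - ε |u|^(2r-2)`. Sturm comparison with
`sin (π (x - a) / (b - a))` shows that between consecutive zeros `a < b` of `u` the coefficient `P`
takes the value `(π / (b - a))²`. Zeros of a nontrivial solution are isolated (uniqueness for the
linear ODE), so the `m` nodal intervals have lengths summing to `1`: one has length `≤ 1/m` and
one has length `≥ 1/m`. Hence `P` attains values `≤ (mπ)²` and `≥ (mπ)²` on `[0, 1]`,
while `P ≤ λ - q₀` for `ε = 1` and `P ≥ λ - q₀` for `ε = -1`.
-/

open Real Set Filter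

theorem HasDerivAt.eq_zero_of_accPt {𝕜 F : Type*} [NontriviallyNormedField 𝕜]
    [NormedAddCommGroup F] [NormedSpace 𝕜 F] {f : 𝕜 → F} {f' : F} {x : 𝕜} {s : Set 𝕜}
    (hf : HasDerivAt f f' x) (hs : AccPt x (𝓟 s)) (hfs : ∀ y ∈ s, f y = 0) : f x = 0 ∧ f' = 0 := by
  have hx : f x = 0 := by
    have := hf.continuousAt.continuousWithinAt.mem_closure_image
      (mem_closure_iff_clusterPt.mpr hs.clusterPt)
    have himg : f '' s ⊆ {0} := by rintro _ ⟨y, hy, rfl⟩; exact hfs y hy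
    simpa using closure_mono himg this
  refine ⟨hx, hs.uniqueDiffWithinAt.eq_deriv s hf.hasDerivWithinAt ?_⟩
  exact (hasDerivWithinAt_const x s 0).congr hfs hx

theorem lipschitzWith_secondOrderSystem {p K : ℝ} (hp : |p| ≤ K) :
    LipschitzWith (max 1 K).toNNReal (fun Y : ℝ × ℝ => (Y.2, -(p * Y.1))) := by
  refine LipschitzWith.of_dist_le_mul fun Y Z => ?_
  rw [Real.coe_toNNReal _ (le_max_of_le_left zero_le_one)]
  simp only [Prod.dist_eq, Real.dist_eq]
  have h1 : |Y.1 - Z.1| ≤ max |Y.1 - Z.1| |Y.2 - Z.2| := le_max_left _ _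
  have h2 : |Y.2 - Z.2| ≤ max |Y.1 - Z.1| |Y.2 - Z.2| := le_max_right _ _
  refine max_le ?_ ?_
  · calc |Y.2 - Z.2| ≤ 1 * max |Y.1 - Z.1| |Y.2 - Z.2| := by linarith
      _ ≤ _ := by gcongr; exact le_max_left _ _
  · calc |-(p * Y.1) - -(p * Z.1)| = |p| * |Y.1 - Z.1| := by
          rw [← abs_mul, ← abs_neg]; ring_nf
      _ ≤ K * max |Y.1 - Z.1| |Y.2 - Z.2| := by gcongr; exact (abs_nonneg p).trans hp
      _ ≤ _ := by gcongr; exact le_max_right _ _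

theorem eqOn_zero_of_linear_ode {P u : ℝ → ℝ} {a b x₀ : ℝ} (hP : ContinuousOn P (Icc a b))
    (hu : Differentiable ℝ u) (hu' : Differentiable ℝ (deriv u))
    (hode : ∀ x ∈ Icc a b, deriv (deriv u) x = -(P x * u x))
    (hx₀ : x₀ ∈ Icc a b) (h₀ : u x₀ = 0) (h₀' : deriv u x₀ = 0) : EqOn u 0 (Icc a b) := by
  obtain ⟨K, hK⟩ := isCompact_Icc.exists_bound_of_continuousOn hP
  set v : ℝ → ℝ × ℝ → ℝ × ℝ := fun t Y => (Y.2, -(P t * Y.1))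
  have hv : ∀ t ∈ Icc a b, LipschitzOnWith (max 1 K).toNNReal (v t) univ := fun t ht =>
    (lipschitzWith_secondOrderSystem (hK t ht)).lipschitzOnWith
  set f : ℝ → ℝ × ℝ := fun t => (u t, deriv u t)
  have hf : ∀ t ∈ Icc a b, HasDerivAt f (v t (f t)) t := fun t ht => by
    simpa [f, v, hode t ht] using (hu t).hasDerivAt.prodMk (hu' t).hasDerivAt
  have hf0 : ∀ t, HasDerivAt (0 : ℝ → ℝ × ℝ) (v t 0) t := fun t => by
    have hv0 : v t 0 = 0 := by simp [v]
    rw [hv0]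
    exact hasDerivAt_const t 0
  have hfc : ContinuousOn f (Icc a b) := (hu.continuous.prodMk hu'.continuous).continuousOn
  have heq : f x₀ = 0 := by simp [f, h₀, h₀']
  have hleft : EqOn f 0 (Icc a x₀) :=
    ODE_solution_unique_of_mem_Icc_left (fun t ht => hv t ⟨ht.1.le, ht.2.trans hx₀.2⟩)
      (hfc.mono (Icc_subset_Icc_right hx₀.2))
      (fun t ht => (hf t ⟨ht.1.le, ht.2.trans hx₀.2⟩).hasDerivWithinAt)
      (fun _ _ => trivial) continuousOn_const (fun t _ => (hf0 t).hasDerivWithinAt)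
      (fun _ _ => trivial) heq
  have hright : EqOn f 0 (Icc x₀ b) :=
    ODE_solution_unique_of_mem_Icc_right (fun t ht => hv t ⟨hx₀.1.trans ht.1, ht.2.le⟩)
      (hfc.mono (Icc_subset_Icc_left hx₀.1))
      (fun t ht => (hf t ⟨hx₀.1.trans ht.1, ht.2.le⟩).hasDerivWithinAt)
      (fun _ _ => trivial) continuousOn_const (fun t _ => (hf0 t).hasDerivWithinAt)
      (fun _ _ => trivial) heq
  intro x hx
  rcases le_total x x₀ with h | h
  · exact congrArg Prod.fst (hleft ⟨hx.1, h⟩)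
  · exact congrArg Prod.fst (hright ⟨h, hx.2⟩)

theorem IsPreconnected.mul_pos_of_ne_zero {X : Type*} [TopologicalSpace X] {s : Set X}
    {f : X → ℝ} (hs : IsPreconnected s)
    (hf : ContinuousOn f s) (hf0 : ∀ x ∈ s, f x ≠ 0) {x y : X} (hx : x ∈ s) (hy : y ∈ s) :
    0 < f x * f y := by
  by_contra! h
  have h0 : (0 : ℝ) ∈ uIcc (f x) (f y) := by
    rcases mul_nonpos_iff.mp h with ⟨h1, h2⟩ | ⟨h1, h2⟩
    · exact mem_uIcc.2 (Or.inr ⟨h2, h1⟩)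
    · exact mem_uIcc.2 (Or.inl ⟨h1, h2⟩)
  obtain ⟨z, hz, hz0⟩ := (hs.image f hf).ordConnected.uIcc_subset ⟨x, hx, rfl⟩ ⟨y, hy, rfl⟩ h0
  exact hf0 z hz hz0

theorem integral_sub_mul_mul_sin_eq_zero {P u : ℝ → ℝ} {a b : ℝ} (hab : a < b)
    (hP : ContinuousOn P (Icc a b)) (hu : Differentiable ℝ u) (hu' : Differentiable ℝ (deriv u))
    (hode : ∀ x ∈ Icc a b, deriv (deriv u) x = -(P x * u x)) (ha : u a = 0) (hb : u b = 0) :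
    ∫ x in a..b, ((π / (b - a)) ^ 2 - P x) * u x * sin (π / (b - a) * (x - a)) = 0 := by
  set c := π / (b - a)
  have hcb : c * (b - a) = π := div_mul_cancel₀ π (sub_pos.2 hab).ne'
  have hphase : ∀ x, HasDerivAt (fun y => c * (y - a)) c x := fun x => by
    simpa using ((hasDerivAt_id x).sub_const a).const_mul c
  -- the Wronskian of `u` and `sin (c * (x - a))`
  have hw : ∀ x ∈ uIcc a b, HasDerivAt
      (fun y => deriv u y * sin (c * (y - a)) - u y * (c * cos (c * (y - a))))
      ((c ^ 2 - P x) * u x * sin (c * (x - a))) x := by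
    intro x hx
    rw [uIcc_of_le hab.le] at hx
    have hsin := (hasDerivAt_sin _).comp x (hphase x)
    have hcos := ((hasDerivAt_cos _).comp x (hphase x)).const_mul c
    refine (((hu' x).hasDerivAt.mul hsin).sub ((hu x).hasDerivAt.mul hcos)).congr_deriv ?_
    simp only [Function.comp_apply, hode x hx]
    ring
  have hcont : ContinuousOn (fun x => (c ^ 2 - P x) * u x * sin (c * (x - a))) (uIcc a b) := by
    rw [uIcc_of_le hab.le]
    have := hu.continuous
    fun_prop
  rw [intervalIntegral.integral_eq_sub_of_hasDerivAt hw (hcont.intervalIntegrable)]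
  simp [ha, hb, hcb]

theorem exists_eq_sq_pi_div_of_consecutive_zeros {P u : ℝ → ℝ} {a b : ℝ} (hab : a < b)
    (hP : ContinuousOn P (Icc a b)) (hu : Differentiable ℝ u) (hu' : Differentiable ℝ (deriv u))
    (hode : ∀ x ∈ Icc a b, deriv (deriv u) x = -(P x * u x)) (ha : u a = 0) (hb : u b = 0)
    (hne : ∀ x ∈ Ioo a b, u x ≠ 0) : ∃ x ∈ Ioo a b, P x = (π / (b - a)) ^ 2 := by
  set c := π / (b - a)
  by_contra! hP_ne
  have hsin : ∀ x ∈ Ioo a b, 0 < sin (c * (x - a)) := fun x hx => by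
    have hcb : c * (b - a) = π := div_mul_cancel₀ π (sub_pos.2 hab).ne'
    have hc : 0 < c := div_pos pi_pos (sub_pos.2 hab)
    apply sin_pos_of_pos_of_lt_pi
    · exact mul_pos hc (sub_pos.2 hx.1)
    · rw [← hcb]; exact mul_lt_mul_of_pos_left (by linarith [hx.2]) hc
  have hPo : ContinuousOn P (Ioo a b) := hP.mono Ioo_subset_Icc_self
  have hm : (a + b) / 2 ∈ Ioo a b := ⟨by linarith, by linarith⟩
  -- `c ^ 2 - P` and `u` keep their signs on `(a, b)`; normalise by their signs at the midpoint
  have hpos : 0 < ∫ x in a..b, ((c ^ 2 - P ((a + b) / 2)) * u ((a + b) / 2)) *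
      ((c ^ 2 - P x) * u x * sin (c * (x - a))) := by
    refine intervalIntegral.intervalIntegral_pos_of_pos_on ?_ (fun x hx => ?_) hab
    · refine ContinuousOn.intervalIntegrable ?_
      rw [uIcc_of_le hab.le]
      have := hu.continuous
      fun_prop
    · have h1 := isPreconnected_Ioo.mul_pos_of_ne_zero (f := fun x => c ^ 2 - P x)
        (by fun_prop) (fun y hy => sub_ne_zero.2 (hP_ne y hy).symm) hx hm
      have h2 := isPreconnected_Ioo.mul_pos_of_ne_zero hu.continuous.continuousOn hne hx hm
      calc 0 < (c ^ 2 - P x) * (c ^ 2 - P ((a + b) / 2)) * (u x * u ((a + b) / 2)) *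
            sin (c * (x - a)) := by have := hsin x hx; positivity
        _ = _ := by ring
  rw [intervalIntegral.integral_const_mul,
    integral_sub_mul_mul_sin_eq_zero hab hP hu hu' hode ha hb, mul_zero] at hpos
  exact hpos.false

open Finset in
/-- For `s = 1` (resp. `s = -1`): if every gap between consecutive points of `T` is longer (resp.
shorter) than `d`, then so is `b - a` compared with `(#T - 1) * d`. -/
theorem Finset.mul_sub_pos_of_consecutive_gaps {T : Finset ℝ} {a b s d : ℝ} (ha : a ∈ T)
    (hb : b ∈ T) (hT : ∀ x ∈ T, x ∈ Set.Icc a b) (hcard : 1 < #T)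
    (hgap : ∀ x ∈ T, ∀ y ∈ T, x < y → (∀ z ∈ T, z ∉ Set.Ioo x y) → 0 < s * (y - x - d)) :
    0 < s * (b - a - (#T - 1) * d) := by
  induction T using Finset.induction_on_max generalizing b with
  | empty => simp at ha
  | insert c t hc ih =>
    have hct : c ∉ t := fun h => (hc c h).false
    have hbc : b = c := by
      rcases mem_insert.1 hb with rfl | hbt
      · rfl
      · exact absurd (hT c (mem_insert_self c t)).2 (hc b hbt).not_ge
    subst hbc
    rw [card_insert_of_notMem hct] at hcard ⊢
    have ht : t.Nonempty := card_pos.1 (by omega)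
    set b' := t.max' ht
    have hb' : b' ∈ t := t.max'_mem ht
    have hat : a ∈ t := by
      rcases mem_insert.1 ha with rfl | hat
      · exact absurd (hT b' (mem_insert_of_mem hb')).1 (hc b' hb').not_ge
      · exact hat
    have hlast : 0 < s * (b - b' - d) := by
      refine hgap b' (mem_insert_of_mem hb') b (mem_insert_self b t) (hc b' hb') fun z hz hz' => ?_
      rcases mem_insert.1 hz with rfl | hzt
      · exact hz'.2.false
      · exact (t.le_max' z hzt).not_gt hz'.1
    rcases (Nat.one_le_iff_ne_zero.2 (card_pos.2 ht).ne').eq_or_lt with h1 | h1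
    · obtain ⟨x, rfl⟩ := card_eq_one.1 h1.symm
      obtain rfl := mem_singleton.1 hat
      simp only [b', max'_singleton] at hlast
      rw [card_singleton]
      push_cast
      linarith
    · have := ih hat hb' (fun x hx => ⟨(hT x (mem_insert_of_mem hx)).1, t.le_max' x hx⟩) h1
        (fun x hx y hy hxy hxy' => hgap x (mem_insert_of_mem hx) y (mem_insert_of_mem hy) hxy
          fun z hz => by
            rcases mem_insert.1 hz with rfl | hzt
            · exact fun h => (hc y hy).not_gt h.2
            · exact hxy' z hzt)
      push_cast
      linarith

open Finset in
theorem Finset.exists_consecutive_gap_le_and_ge {T : Finset ℝ} {a b d : ℝ} (ha : a ∈ T)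
    (hb : b ∈ T) (hT : ∀ x ∈ T, x ∈ Set.Icc a b) (hcard : 1 < #T) (hd : (#T - 1) * d = b - a) :
    (∃ x ∈ T, ∃ y ∈ T, x < y ∧ (∀ z ∈ T, z ∉ Set.Ioo x y) ∧ y - x ≤ d) ∧
      ∃ x ∈ T, ∃ y ∈ T, x < y ∧ (∀ z ∈ T, z ∉ Set.Ioo x y) ∧ d ≤ y - x := by
  constructor
  · by_contra! h
    have := mul_sub_pos_of_consecutive_gaps (s := 1) (d := d) ha hb hT hcard
      fun x hx y hy hxy hcons => by linarith [h x hx y hy hxy hcons]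
    rw [hd, sub_self, mul_zero] at this
    exact this.false
  · by_contra! h
    have := mul_sub_pos_of_consecutive_gaps (s := -1) (d := d) ha hb hT hcard
      fun x hx y hy hxy hcons => by linarith [h x hx y hy hxy hcons]
    rw [hd, sub_self, mul_zero] at this
    exact this.false

theorem finite_zeros_of_linear_ode {P u : ℝ → ℝ} {a b : ℝ} (hP : ContinuousOn P (Icc a b))
    (hu : Differentiable ℝ u) (hu' : Differentiable ℝ (deriv u))
    (hode : ∀ x ∈ Icc a b, deriv (deriv u) x = -(P x * u x)) (hnt : ∃ x ∈ Icc a b, u x ≠ 0) :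
    {x ∈ Icc a b | u x = 0}.Finite := by
  by_contra hinf
  obtain ⟨x₀, hx₀, hacc⟩ :=
    Set.Infinite.exists_accPt_of_subset_isCompact hinf isCompact_Icc (sep_subset _ _)
  obtain ⟨h₀, h₀'⟩ := (hu x₀).hasDerivAt.eq_zero_of_accPt hacc fun x hx => hx.2
  obtain ⟨x, hx, hx0⟩ := hnt
  exact hx0 (eqOn_zero_of_linear_ode hP hu hu' hode hx₀ h₀ h₀' hx)

theorem Set.ncard_sep_Icc {α : Type*} [LinearOrder α] {p : α → Prop} {a b : α} (hab : a < b)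
    (ha : p a) (hb : p b) (hfin : {x ∈ Ioo a b | p x}.Finite) :
    {x ∈ Icc a b | p x}.ncard = {x ∈ Ioo a b | p x}.ncard + 2 := by
  have hset : {x ∈ Icc a b | p x} = insert a (insert b {x ∈ Ioo a b | p x}) := by
    rw [← Ico_insert_right hab.le, ← Ioo_insert_left hab]
    ext x
    simp only [Set.mem_ofPred_eq, mem_insert_iff]
    aesop
  rw [hset, ncard_insert_of_notMem _ (hfin.insert b), ncard_insert_of_notMem _ hfin]
  · exact fun h => h.1.2.false
  · rintro (h | h)
    · exact hab.ne h
    · exact h.1.1.false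

theorem exists_le_and_exists_ge_of_ncard_zeros {P u : ℝ → ℝ} {a b : ℝ} {m : ℕ} (hab : a < b)
    (hP : ContinuousOn P (Icc a b)) (hu : Differentiable ℝ u) (hu' : Differentiable ℝ (deriv u))
    (hode : ∀ x ∈ Icc a b, deriv (deriv u) x = -(P x * u x)) (hnt : ∃ x ∈ Icc a b, u x ≠ 0)
    (ha : u a = 0) (hb : u b = 0) (hm : 1 ≤ m)
    (hzeros : {x ∈ Ioo a b | u x = 0}.ncard = m - 1) :
    (∃ x ∈ Icc a b, P x ≤ (m * π / (b - a)) ^ 2) ∧ ∃ x ∈ Icc a b, (m * π / (b - a)) ^ 2 ≤ P x := by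
  have hZ := finite_zeros_of_linear_ode hP hu hu' hode hnt
  set T := hZ.toFinset
  have hT : ∀ {x}, x ∈ T ↔ x ∈ Icc a b ∧ u x = 0 := hZ.mem_toFinset
  have hm0 : (0 : ℝ) < m := by exact_mod_cast hm
  have hcard : (T.card : ℝ) = m + 1 := by
    rw [← Set.ncard_eq_toFinset_card _ hZ, Set.ncard_sep_Icc hab ha hb
      (hZ.subset fun x hx => ⟨Ioo_subset_Icc_self hx.1, hx.2⟩), hzeros]
    push_cast [Nat.cast_sub hm]
    ring
  obtain ⟨⟨x, hx, y, hy, hxy, hcons, hshort⟩, ⟨x', hx', y', hy', hxy', hcons', hlong⟩⟩ :=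
    Finset.exists_consecutive_gap_le_and_ge (d := (b - a) / m) (hT.2 ⟨⟨le_rfl, hab.le⟩, ha⟩)
      (hT.2 ⟨⟨hab.le, le_rfl⟩, hb⟩) (fun x hx => (hT.1 hx).1)
      (by exact_mod_cast (by linarith : (1 : ℝ) < T.card))
      (by rw [hcard, add_sub_cancel_right, mul_div_cancel₀ _ hm0.ne'])
  have hgap : ∀ x ∈ T, ∀ y ∈ T, x < y → (∀ z ∈ T, z ∉ Ioo x y) →
      ∃ t ∈ Icc a b, P t = (π / (y - x)) ^ 2 := by
    intro x hx y hy hxy hcons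
    have hsub : Icc x y ⊆ Icc a b := Icc_subset_Icc (hT.1 hx).1.1 (hT.1 hy).1.2
    obtain ⟨t, ht, hPt⟩ := exists_eq_sq_pi_div_of_consecutive_zeros hxy (hP.mono hsub) hu hu'
      (fun t ht => hode t (hsub ht)) (hT.1 hx).2 (hT.1 hy).2
      (fun z hz hz0 => hcons z (hT.2 ⟨hsub (Ioo_subset_Icc_self hz), hz0⟩) hz)
    exact ⟨t, hsub (Ioo_subset_Icc_self ht), hPt⟩
  have hsq : ∀ {g g' : ℝ}, 0 < g → g ≤ g' → (π / g') ^ 2 ≤ (π / g) ^ 2 := fun hg h =>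
    pow_le_pow_left₀ (div_pos pi_pos (hg.trans_le h)).le
      (div_le_div_of_nonneg_left pi_pos.le hg h) 2
  rw [show m * π / (b - a) = π / ((b - a) / m) by field_simp]
  obtain ⟨t, ht, hPt⟩ := hgap x' hx' y' hy' hxy' hcons'
  obtain ⟨t', ht', hPt'⟩ := hgap x hx y hy hxy hcons
  exact ⟨⟨t, ht, hPt ▸ hsq (div_pos (sub_pos.2 hab) hm0) hlong⟩,
    ⟨t', ht', hPt' ▸ hsq (sub_pos.2 hxy) hshort⟩⟩

theorem stmt_10_general (q0 lam ε r : ℝ) (hr : 1 < r) (hε : ε = 1 ∨ ε = -1)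
    (m : ℕ) (hm : 1 ≤ m)
    (u : ℝ → ℝ) (hu : ContDiff ℝ 2 u)
    (hnt : ∃ x ∈ Set.Icc (0:ℝ) 1, u x ≠ 0)
    (h0 : u 0 = 0) (h1 : u 1 = 0)
    (hode : ∀ x ∈ Set.Icc (0:ℝ) 1,
      -(deriv (deriv u) x) + q0 * u x + ε * (|u x| ^ (2 * r - 2) * u x) = lam * u x)
    (hzeros : {x ∈ Set.Ioo (0:ℝ) 1 | u x = 0}.ncard = m - 1) :
    ((m:ℝ) ^ 2 * π ^ 2 < lam - q0 → ε = 1) ∧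
    (lam - q0 < (m:ℝ) ^ 2 * π ^ 2 → ε = -1) := by
  have hu₁ : Differentiable ℝ u := hu.differentiable two_ne_zero
  have hu₂ : Differentiable ℝ (deriv u) :=
    (contDiff_succ_iff_deriv.mp (hu : ContDiff ℝ (1 + 1) u)).2.2.differentiable one_ne_zero
  set P : ℝ → ℝ := fun x => lam - q0 - ε * |u x| ^ (2 * r - 2)
  have hP : Continuous P := by
    have := hu₁.continuous
    have : 0 ≤ 2 * r - 2 := by linarith
    fun_prop (disch := assumption)
  have hodeP : ∀ x ∈ Icc (0:ℝ) 1, deriv (deriv u) x = -(P x * u x) := fun x hx => by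
    linear_combination -hode x hx
  obtain ⟨⟨x, -, hPx⟩, ⟨y, -, hPy⟩⟩ := exists_le_and_exists_ge_of_ncard_zeros zero_lt_one
    hP.continuousOn hu₁ hu₂ hodeP hnt h0 h1 hm hzeros
  have hpow : 0 ≤ |u x| ^ (2 * r - 2) ∧ 0 ≤ |u y| ^ (2 * r - 2) :=
    ⟨rpow_nonneg (abs_nonneg _) _, rpow_nonneg (abs_nonneg _) _⟩
  simp only [sub_zero, div_one, mul_pow, P] at hPx hPy
  rcases hε with rfl | rfl
  · exact ⟨fun _ => rfl, fun h => by linarith⟩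
  · exact ⟨fun h => by linarith, fun _ => rfl⟩

theorem stmt_10 (q0 lam ε r : ℝ) (hr : 1 < r) (hε : ε = 1 ∨ ε = -1)
    (m : ℕ) (hm : 1 ≤ m)
    (u : ℝ → ℝ) (hu : ContDiff ℝ 2 u)
    (hnt : ∃ x ∈ Set.Icc (0:ℝ) 1, u x ≠ 0)
    (h0 : u 0 = 0) (h1 : u 1 = 0)
    (hode : ∀ x ∈ Set.Icc (0:ℝ) 1,
      -(deriv (deriv u) x) + q0 * u x + ε * (|u x| ^ (2 * r - 2) * u x) = lam * u x)
    (hzeros : {x ∈ Set.Ioo (0:ℝ) 1 | u x = 0}.ncard = m - 1)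
    (hpos : 0 < lam - q0) (hne : lam ≠ q0 + (m:ℝ) ^ 2 * π ^ 2) :
    ((m:ℝ) ^ 2 * π ^ 2 < lam - q0 → ε = 1) ∧
    (lam - q0 < (m:ℝ) ^ 2 * π ^ 2 → ε = -1) :=
  stmt_10_general q0 lam ε r hr hε m hm u hu hnt h0 h1 hode hzeros
end
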